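/- There exists a constant c > 0, independent of g, such that for every g ∈ C₀³(ℝ³; ℝ³) with |x| curl g ∈ L²(ℝ³) and |x| (∇·g) ∈ L²(ℝ³), one has ‖|x| ∇g‖_{L²} ≤ c(‖|x| curl g‖_{L²} + ‖|x| ∇·g‖_{L²}). -/

import Mathlib

open MeasureTheory Real Set
open scoped ENNReal RealInnerProductSpace

noncomputable section

abbrev E3 := EuclideanSpace ℝ (Fin 3)

/-- partial derivative of a scalar field in direction `i`. -/
noncomputable def pd (f : E3 → ℝ) (i : Fin 3) (x : E3) : ℝ :=
  fderiv ℝ f x (EuclideanSpace.single i 1)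

noncomputable def toE3 (v : Fin 3 → ℝ) : E3 := (WithLp.equiv 2 (Fin 3 → ℝ)).symm v

/-- cross product in ℝ³. -/
noncomputable def cross3 (a b : E3) : E3 :=
  toE3 ![a 1 * b 2 - a 2 * b 1, a 2 * b 0 - a 0 * b 2, a 0 * b 1 - a 1 * b 0]

/-- curl of a vector field. -/
noncomputable def curl3 (f : E3 → E3) (x : E3) : E3 :=
  toE3 ![pd (fun y => f y 2) 1 x - pd (fun y => f y 1) 2 x,
         pd (fun y => f y 0) 2 x - pd (fun y => f y 2) 0 x,
         pd (fun y => f y 1) 0 x - pd (fun y => f y 0) 1 x]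

/-- divergence of a vector field. -/
noncomputable def div3 (f : E3 → E3) (x : E3) : ℝ := ∑ i, pd (fun y => f y i) i x

/-- gradient of a scalar field. -/
noncomputable def grad3 (h : E3 → ℝ) (x : E3) : E3 := toE3 (fun i => pd h i x)

/-- scalar Laplacian. -/
noncomputable def lap3 (h : E3 → ℝ) (x : E3) : ℝ := ∑ i, pd (pd h i) i x

/-- componentwise (vector) Laplacian. -/
noncomputable def vlap3 (f : E3 → E3) (x : E3) : E3 := toE3 (fun i => lap3 (fun y => f y i) x)

/-- squared Frobenius norm of the Jacobian ∇f. -/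
noncomputable def jacFrobSq (f : E3 → E3) (x : E3) : ℝ :=
  ∑ i, ∑ j, (pd (fun y => f y i) j x)^2

/-! Write `W = ‖x‖²` and `∂ⱼgᵢ` for the entries of the Jacobian. Pointwise,
`|∇g|² - |curl g|² - (div g)² = ∑ᵢⱼ (∂ⱼgᵢ ∂ᵢgⱼ - ∂ᵢgᵢ ∂ⱼgⱼ)`, and after multiplying by `W` each
summand integrates by parts (the third derivatives cancel), giving
`∫ W |∇g|² = ∫ W |curl g|² + ∫ W (div g)² + 4 ∫ ⟪x, g⟫ div g + 2 ∫ |g|²`.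
The Hardy inequality `∫ |g|² ≤ 4/9 ∫ W |∇g|²`, which comes from `3 ∫ u² = -2 ∫ u ⟪x, ∇u⟫`, and
the pointwise bound `4 ⟪x, g⟫ div g ≤ |g|²/8 + 32 W (div g)²` absorb the last two terms:
`∫ W |∇g|² ≤ 18 ∫ W |curl g|² + 594 ∫ W (div g)²`, so `c = 25` works. -/

theorem integral_sum_sum {α ι κ : Type*} [Fintype ι] [Fintype κ] [MeasurableSpace α]
    {μ : Measure α} {f : ι → κ → α → ℝ} (hf : ∀ i j, Integrable (f i j) μ) :
    ∫ x, ∑ i, ∑ j, f i j x ∂μ = ∑ i, ∑ j, ∫ x, f i j x ∂μ := by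
  rw [integral_finsetSum _ fun i _ => integrable_finsetSum _ fun j _ => hf i j]
  exact Finset.sum_congr rfl fun i _ => integral_finsetSum _ fun j _ => hf i j

theorem eLpNorm_two_eq_sqrt_integral_sq {α : Type*} [MeasurableSpace α] {μ : Measure α}
    {f : α → ℝ} (hf : MemLp f 2 μ) : eLpNorm f 2 μ = ENNReal.ofReal √(∫ x, f x ^ 2 ∂μ) := by
  rw [hf.eLpNorm_eq_integral_rpow_norm two_ne_zero ENNReal.ofNat_ne_top, Real.sqrt_eq_rpow]
  simp only [ENNReal.toReal_ofNat, Real.norm_eq_abs, Real.rpow_two, sq_abs, one_div]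

theorem Real.sqrt_le_mul_add_sqrt {a b c k : ℝ} (ha : 0 ≤ a) (hb : 0 ≤ b) (hk : 0 ≤ k)
    (h : c ≤ k ^ 2 * (a + b)) : √c ≤ k * (√a + √b) := by
  rw [Real.sqrt_le_left (by positivity)]
  nlinarith [Real.sq_sqrt ha, Real.sq_sqrt hb, Real.sqrt_nonneg a, Real.sqrt_nonneg b,
    mul_nonneg (Real.sqrt_nonneg a) (Real.sqrt_nonneg b)]

theorem contDiff_pd {f : E3 → ℝ} {m n : WithTop ℕ∞} (hf : ContDiff ℝ n f) (h : m + 1 ≤ n)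
    (i : Fin 3) : ContDiff ℝ m (pd f i) :=
  (hf.fderiv_right h).clm_apply contDiff_const

theorem continuous_pd {f : E3 → ℝ} (hf : ContDiff ℝ 1 f) (i : Fin 3) : Continuous (pd f i) :=
  (contDiff_pd (m := 0) hf le_rfl i).continuous

theorem HasCompactSupport.pd {f : E3 → ℝ} (hf : HasCompactSupport f) (i : Fin 3) :
    HasCompactSupport (pd f i) :=
  hf.fderiv_apply ℝ _

theorem pd_eq_zero_of_notMem_tsupport {f : E3 → ℝ} {x : E3} (hx : x ∉ tsupport f) (i : Fin 3) :
    pd f i x = 0 :=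
  image_eq_zero_of_notMem_tsupport fun h => hx (tsupport_fderiv_apply_subset ℝ _ h)

theorem pd_mul {f h : E3 → ℝ} {x : E3} (hf : DifferentiableAt ℝ f x)
    (hh : DifferentiableAt ℝ h x) (i : Fin 3) :
    pd (fun y => f y * h y) i x = pd f i x * h x + f x * pd h i x := by
  simp only [pd, fderiv_fun_mul hf hh, add_apply, FunLike.coe_smul, Pi.smul_apply, smul_eq_mul]
  ring

theorem pd_sum {ι : Type*} (s : Finset ι) {f : ι → E3 → ℝ} {x : E3}
    (hf : ∀ k ∈ s, DifferentiableAt ℝ (f k) x) (i : Fin 3) :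
    pd (fun y => ∑ k ∈ s, f k y) i x = ∑ k ∈ s, pd (f k) i x := by
  simp only [pd, fderiv_fun_sum hf, FunLike.coe_sum, Finset.sum_apply]

theorem pd_coord (i j : Fin 3) (x : E3) : pd (fun y => y j) i x = if i = j then 1 else 0 := by
  rw [pd, show (fun y : E3 => y j) = EuclideanSpace.proj j from rfl, ContinuousLinearMap.fderiv]
  simp [PiLp.single_apply, eq_comm]

theorem pd_norm_sq (i : Fin 3) (x : E3) : pd (fun y => ‖y‖ ^ 2) i x = 2 * x i := by
  simp [pd, fderiv_norm_sq_apply, EuclideanSpace.inner_single_right]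

theorem pd_pd_comm {f : E3 → ℝ} (hf : ContDiff ℝ 2 f) (i j : Fin 3) (x : E3) :
    pd (pd f i) j x = pd (pd f j) i x := by
  have hf' : DifferentiableAt ℝ (fderiv ℝ f) x :=
    (hf.fderiv_right le_rfl).differentiable one_ne_zero x
  have hpd : ∀ k l, pd (pd f k) l x =
      fderiv ℝ (fderiv ℝ f) x (EuclideanSpace.single l 1) (EuclideanSpace.single k 1) := by
    intro k l
    change fderiv ℝ (fun y => fderiv ℝ f y (EuclideanSpace.single k 1)) x _ = _
    simp [fderiv_clm_apply hf' (differentiableAt_const _)]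
  rw [hpd, hpd, (hf.contDiffAt.isSymmSndFDerivAt (by simp)).eq]

theorem integral_mul_pd {u v : E3 → ℝ} (hu : ContDiff ℝ 1 u) (hv : ContDiff ℝ 1 v)
    (hvs : HasCompactSupport v) (j : Fin 3) :
    ∫ x, u x * pd v j x = -∫ x, pd u j x * v x := by
  refine integral_mul_fderiv_eq_neg_fderiv_mul_of_integrable ?_ ?_ ?_
    (fun x _ => hu.differentiable one_ne_zero x) (fun x _ => hv.differentiable one_ne_zero x)
  · exact ((continuous_pd hu j).mul hv.continuous).integrable_of_hasCompactSupport hvs.mul_left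
  · exact (hu.continuous.mul (continuous_pd hv j)).integrable_of_hasCompactSupport
      (hvs.pd j).mul_left
  · exact (hu.continuous.mul hv.continuous).integrable_of_hasCompactSupport hvs.mul_left

theorem continuous_grad3 {u : E3 → ℝ} (hu : ContDiff ℝ 1 u) : Continuous (grad3 u) :=
  (PiLp.continuous_toLp 2 _).comp (continuous_pi (continuous_pd hu))

theorem norm_grad3_sq (u : E3 → ℝ) (x : E3) : ‖grad3 u x‖ ^ 2 = ∑ j, pd u j x ^ 2 := by
  simp [grad3, toE3, EuclideanSpace.real_norm_sq_eq]

theorem inner_grad3 (u : E3 → ℝ) (x : E3) : ⟪x, grad3 u x⟫ = ∑ j, x j * pd u j x := by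
  simp [grad3, toE3, PiLp.inner_apply, mul_comm]

theorem integral_sq_eq_neg_inner_grad3 {u : E3 → ℝ} (hu : ContDiff ℝ 1 u)
    (hs : HasCompactSupport u) :
    3 * ∫ x, u x ^ 2 = -2 * ∫ x, u x * ⟪x, grad3 u x⟫ := by
  have hcoord : ∀ j : Fin 3, ContDiff ℝ 1 fun y : E3 => y j := fun j => by fun_prop
  have hu2 : ContDiff ℝ 1 fun y => u y * u y := hu.mul hu
  have hibp : ∀ j, ∫ x, x j * pd (fun y => u y * u y) j x = -∫ x, u x ^ 2 := fun j => by
    simp [integral_mul_pd (hcoord j) hu2 hs.mul_left, pd_coord, sq]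
  have hint : ∀ j, Integrable fun x : E3 => x j * pd (fun y => u y * u y) j x := fun j =>
    ((hcoord j).continuous.mul (continuous_pd hu2 j)).integrable_of_hasCompactSupport
      (hs.mul_left.pd j).mul_left
  have hd : ∀ x, DifferentiableAt ℝ u x := hu.differentiable one_ne_zero
  calc 3 * ∫ x, u x ^ 2 = -∑ j, ∫ x, x j * pd (fun y => u y * u y) j x := by
        simp [hibp]
    _ = -∫ x, ∑ j, x j * pd (fun y => u y * u y) j x := by
        rw [integral_finsetSum _ fun j _ => hint j]
    _ = -2 * ∫ x, u x * ⟪x, grad3 u x⟫ := by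
        rw [← integral_const_mul, ← integral_neg]
        congr 1 with x
        simp only [pd_mul (hd x) (hd x), inner_grad3, Finset.mul_sum, ← Finset.sum_neg_distrib]
        exact Finset.sum_congr rfl fun j _ => by ring

theorem integral_sq_le_hardy {u : E3 → ℝ} (hu : ContDiff ℝ 1 u) (hs : HasCompactSupport u) :
    ∫ x, u x ^ 2 ≤ 4 / 9 * ∫ x, ‖x‖ ^ 2 * ‖grad3 u x‖ ^ 2 := by
  have hgc := continuous_grad3 hu
  have huc := hu.continuous
  have hint : ∀ {f : E3 → ℝ}, Continuous f → (∀ x, u x = 0 → grad3 u x = 0 → f x = 0) →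
      Integrable f := fun hf h0 =>
    hf.integrable_of_hasCompactSupport <| hs.mono' <| Function.support_subset_iff'.2
      fun x hx => h0 x (image_eq_zero_of_notMem_tsupport hx) <| by
        ext j
        simp [grad3, toE3, pd_eq_zero_of_notMem_tsupport hx]
  have hpt : ∀ x : E3, -2 * (u x * ⟪x, grad3 u x⟫)
      ≤ 3 / 2 * u x ^ 2 + 2 / 3 * (‖x‖ ^ 2 * ‖grad3 u x‖ ^ 2) := fun x => by
    -- Cauchy–Schwarz, then AM-GM
    have hcs := abs_real_inner_le_norm x (grad3 u x)
    nlinarith [sq_nonneg (3 * |u x| - 2 * (‖x‖ * ‖grad3 u x‖)), abs_mul_abs_self (u x),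
      abs_mul (u x) ⟪x, grad3 u x⟫, neg_abs_le (u x * ⟪x, grad3 u x⟫), abs_nonneg (u x)]
  have hmono := integral_mono (hint (by fun_prop) (by simp_all))
    (hint (by fun_prop) (by simp_all)) hpt
  rw [integral_add (hint (by fun_prop) (by simp_all)) (hint (by fun_prop) (by simp_all)),
    integral_const_mul, integral_const_mul, integral_const_mul] at hmono
  linarith [integral_sq_eq_neg_inner_grad3 hu hs]

abbrev jac (g : E3 → E3) (i j : Fin 3) : E3 → ℝ := pd (fun y => g y i) j

section VectorField

variable {g : E3 → E3}

theorem contDiff_jac {m n : WithTop ℕ∞} (hg : ContDiff ℝ n g) (h : m + 1 ≤ n) (i j : Fin 3) :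
    ContDiff ℝ m (jac g i j) :=
  contDiff_pd (by fun_prop) h j

theorem continuous_jac (hg : ContDiff ℝ 1 g) (i j : Fin 3) : Continuous (jac g i j) :=
  (contDiff_jac (m := 0) hg le_rfl i j).continuous

theorem HasCompactSupport.of_vanishing_jet (hs : HasCompactSupport g) {f : E3 → ℝ}
    (h0 : ∀ x, g x = 0 → (∀ i j, jac g i j x = 0) → f x = 0) : HasCompactSupport f :=
  hs.mono' <| Function.support_subset_iff'.2 fun x hx =>
    h0 x (image_eq_zero_of_notMem_tsupport hx) fun i j => pd_eq_zero_of_notMem_tsupport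
      (fun h => hx (tsupport_comp_subset (g := fun v : E3 => v i) rfl g h)) j

theorem HasCompactSupport.integrable_of_vanishing_jet (hs : HasCompactSupport g)
    {f : E3 → ℝ} (hf : Continuous f)
    (h0 : ∀ x, g x = 0 → (∀ i j, jac g i j x = 0) → f x = 0) : Integrable f :=
  hf.integrable_of_hasCompactSupport (hs.of_vanishing_jet h0)

theorem continuous_jacFrobSq (hg : ContDiff ℝ 1 g) : Continuous (jacFrobSq g) := by
  have := continuous_jac hg
  unfold jacFrobSq
  fun_prop

theorem continuous_curl3 (hg : ContDiff ℝ 1 g) : Continuous (curl3 g) := by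
  have := continuous_jac hg
  refine (PiLp.continuous_toLp 2 _).comp (continuous_pi fun i => ?_)
  fin_cases i <;> dsimp <;> fun_prop

theorem continuous_div3 (hg : ContDiff ℝ 1 g) : Continuous (div3 g) := by
  have := continuous_jac hg
  unfold div3
  fun_prop

theorem jacFrobSq_nonneg (g : E3 → E3) (x : E3) : 0 ≤ jacFrobSq g x :=
  Finset.sum_nonneg fun _ _ => Finset.sum_nonneg fun _ _ => sq_nonneg _

theorem jacFrobSq_eq_sum_norm_grad3_sq (g : E3 → E3) (x : E3) :
    jacFrobSq g x = ∑ i, ‖grad3 (fun y => g y i) x‖ ^ 2 := by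
  simp only [jacFrobSq, norm_grad3_sq]

theorem norm_curl3_sq (g : E3 → E3) (x : E3) : ‖curl3 g x‖ ^ 2 =
    (jac g 2 1 x - jac g 1 2 x) ^ 2 + (jac g 0 2 x - jac g 2 0 x) ^ 2
      + (jac g 1 0 x - jac g 0 1 x) ^ 2 := by
  simp [curl3, toE3, EuclideanSpace.real_norm_sq_eq, Fin.sum_univ_three]

theorem jacFrobSq_sub_norm_curl3_sq_sub_div3_sq (g : E3 → E3) (x : E3) :
    jacFrobSq g x - ‖curl3 g x‖ ^ 2 - div3 g x ^ 2 =
      ∑ i, ∑ j, (jac g i j x * jac g j i x - jac g i i x * jac g j j x) := by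
  rw [norm_curl3_sq]
  simp only [jacFrobSq, div3, jac, Fin.sum_univ_three]
  ring

theorem pd_inner_self (hg : ContDiff ℝ 1 g) (i : Fin 3) (x : E3) :
    pd (fun y => ⟪y, g y⟫) i x = g x i + ∑ j, x j * jac g j i x := by
  have hsum : (fun y : E3 => ⟪y, g y⟫) = fun y => ∑ j, y j * g y j := by
    ext y
    simp [PiLp.inner_apply, mul_comm]
  have hd : ∀ j, DifferentiableAt ℝ (fun y => g y j) x := fun j => by
    have := hg.differentiable one_ne_zero x
    fun_prop
  have hc : ∀ j, DifferentiableAt ℝ (fun y : E3 => y j) x := fun j => by fun_prop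
  rw [hsum, pd_sum (f := fun j y => y j * g y j) _ fun j _ => (hc j).fun_mul (hd j)]
  simp [pd_mul (hc _) (hd _), pd_coord, Finset.sum_add_distrib]

theorem integral_norm_sq_mul_jac_swap (hg : ContDiff ℝ 2 g) (hs : HasCompactSupport g)
    (i j : Fin 3) :
    ∫ x, ‖x‖ ^ 2 * (jac g i j x * jac g j i x - jac g i i x * jac g j j x)
      = 2 * ∫ x, (x i * jac g j j x - x j * jac g j i x) * g x i := by
  have hg1 : ContDiff ℝ 1 g := hg.of_le (by norm_num)
  have hgi : ContDiff ℝ 1 fun y => g y i := by fun_prop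
  have hgis : HasCompactSupport fun y => g y i := hs.comp_left (g := fun v : E3 => v i) rfl
  have hJ := continuous_jac hg1
  set F : Fin 3 → E3 → ℝ := fun l y => ‖y‖ ^ 2 * jac g j l y with hF_def
  have hF : ∀ l, ContDiff ℝ 1 (F l) := fun l =>
    (contDiff_norm_sq ℝ).mul (contDiff_jac hg (by norm_num) j l)
  have hpdF : ∀ k l, Continuous (pd (F l) k) := fun k l => continuous_pd (hF l) k
  -- the third derivatives cancel by symmetry of the Hessian of `g j`
  have hcomm : ∀ x, pd (F j) i x - pd (F i) j x = 2 * (x i * jac g j j x - x j * jac g j i x) := by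
    intro x
    have hd : ∀ l, DifferentiableAt ℝ (jac g j l) x := fun l =>
      (contDiff_jac hg (by norm_num) j l).differentiable one_ne_zero x
    have hW : DifferentiableAt ℝ (fun y : E3 => ‖y‖ ^ 2) x :=
      (contDiff_norm_sq ℝ).differentiable one_ne_zero x
    have hsym : pd (jac g j i) j x = pd (jac g j j) i x :=
      pd_pd_comm (f := fun y => g y j) (by fun_prop) i j x
    simp only [hF_def, pd_mul hW (hd _), pd_norm_sq, hsym]
    ring
  calc ∫ x, ‖x‖ ^ 2 * (jac g i j x * jac g j i x - jac g i i x * jac g j j x)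
      = (∫ x, F i x * pd (fun y => g y i) j x) - ∫ x, F j x * pd (fun y => g y i) i x := by
        rw [← integral_sub]
        · congr 1 with x
          ring
        all_goals exact hs.integrable_of_vanishing_jet (by fun_prop) (by simp_all)
    _ = (∫ x, pd (F j) i x * g x i) - ∫ x, pd (F i) j x * g x i := by
        rw [integral_mul_pd (hF i) hgi hgis j, integral_mul_pd (hF j) hgi hgis i]
        ring
    _ = ∫ x, (pd (F j) i x - pd (F i) j x) * g x i := by
        rw [← integral_sub]
        · congr 1 with x
          ring
        all_goals exact hs.integrable_of_vanishing_jet (by fun_prop) (by simp_all)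
    _ = 2 * ∫ x, (x i * jac g j j x - x j * jac g j i x) * g x i := by
        rw [← integral_const_mul]
        congr 1 with x
        rw [hcomm]
        ring

theorem integral_inner_mul_div3 (hg : ContDiff ℝ 1 g) (hs : HasCompactSupport g) :
    ∫ x, ⟪x, g x⟫ * div3 g x = -∫ x, ∑ i, (g x i + ∑ j, x j * jac g j i x) * g x i := by
  have hr : ContDiff ℝ 1 fun y : E3 => ⟪y, g y⟫ := contDiff_id.inner ℝ hg
  have hJ := continuous_jac hg
  have hpdr := continuous_pd hr
  calc ∫ x, ⟪x, g x⟫ * div3 g x = ∑ i, ∫ x, ⟪x, g x⟫ * pd (fun y => g y i) i x := by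
        simp only [div3, Finset.mul_sum]
        exact integral_finsetSum _ fun i _ => hs.integrable_of_vanishing_jet (by fun_prop) (by simp_all)
    _ = -∑ i, ∫ x, pd (fun y : E3 => ⟪y, g y⟫) i x * g x i := by
        simp only [← Finset.sum_neg_distrib]
        exact Finset.sum_congr rfl fun i _ => integral_mul_pd hr (by fun_prop)
          (hs.comp_left (g := fun v : E3 => v i) rfl) i
    _ = -∫ x, ∑ i, (g x i + ∑ j, x j * jac g j i x) * g x i := by
        rw [integral_finsetSum _ fun i _ => hs.integrable_of_vanishing_jet (by fun_prop) (by simp_all)]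
        simp only [pd_inner_self hg]

theorem integral_norm_sq_mul_jacFrobSq (hg : ContDiff ℝ 2 g) (hs : HasCompactSupport g) :
    ∫ x, ‖x‖ ^ 2 * jacFrobSq g x
      = (∫ x, ‖x‖ ^ 2 * ‖curl3 g x‖ ^ 2) + (∫ x, ‖x‖ ^ 2 * div3 g x ^ 2)
        + 4 * (∫ x, ⟪x, g x⟫ * div3 g x) + 2 * ∫ x, ‖g x‖ ^ 2 := by
  have hg1 : ContDiff ℝ 1 g := hg.of_le (by norm_num)
  have hJ := continuous_jac hg1
  have hgc := hg.continuous
  have hJFc := continuous_jacFrobSq hg1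
  have hcurlc := continuous_curl3 hg1
  have hdivc := continuous_div3 hg1
  have hpt : ∀ x, ‖x‖ ^ 2 * jacFrobSq g x
      = ‖x‖ ^ 2 * ‖curl3 g x‖ ^ 2 + ‖x‖ ^ 2 * div3 g x ^ 2
        + ∑ i, ∑ j, ‖x‖ ^ 2 * (jac g i j x * jac g j i x - jac g i i x * jac g j j x) := by
    intro x
    simp only [← Finset.mul_sum, ← jacFrobSq_sub_norm_curl3_sq_sub_div3_sq]
    ring
  have hrad : ∀ x, ∑ i, ∑ j, (x i * jac g j j x - x j * jac g j i x) * g x i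
      = ⟪x, g x⟫ * div3 g x - ∑ i, (g x i + ∑ j, x j * jac g j i x) * g x i + ‖g x‖ ^ 2 := by
    intro x
    simp only [PiLp.inner_apply, div3, EuclideanSpace.real_norm_sq_eq, Fin.sum_univ_three,
      RCLike.inner_apply, conj_trivial]
    ring
  calc ∫ x, ‖x‖ ^ 2 * jacFrobSq g x
      = (∫ x, ‖x‖ ^ 2 * ‖curl3 g x‖ ^ 2) + (∫ x, ‖x‖ ^ 2 * div3 g x ^ 2)
        + ∫ x, ∑ i, ∑ j, ‖x‖ ^ 2 * (jac g i j x * jac g j i x - jac g i i x * jac g j j x) := by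
        simp only [hpt]
        rw [integral_add, integral_add]
        all_goals exact hs.integrable_of_vanishing_jet (by fun_prop) (by simp_all [curl3, div3, toE3])
    _ = (∫ x, ‖x‖ ^ 2 * ‖curl3 g x‖ ^ 2) + (∫ x, ‖x‖ ^ 2 * div3 g x ^ 2)
        + 2 * ∫ x, ∑ i, ∑ j, (x i * jac g j j x - x j * jac g j i x) * g x i := by
        rw [integral_sum_sum, integral_sum_sum, Finset.mul_sum]
        · simp only [Finset.mul_sum, integral_norm_sq_mul_jac_swap hg hs]
        all_goals exact fun i j => hs.integrable_of_vanishing_jet (by fun_prop) (by simp_all)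
    _ = _ := by
        simp only [hrad]
        rw [integral_add, integral_sub]
        · linarith [integral_inner_mul_div3 hg1 hs]
        all_goals exact hs.integrable_of_vanishing_jet (by fun_prop) (by simp_all [div3])

theorem integral_norm_sq_le_hardy (hg : ContDiff ℝ 1 g) (hs : HasCompactSupport g) :
    ∫ x, ‖g x‖ ^ 2 ≤ 4 / 9 * ∫ x, ‖x‖ ^ 2 * jacFrobSq g x := by
  have hgi : ∀ i, ContDiff ℝ 1 fun y => g y i := fun i => by fun_prop
  have hgradc := fun i => continuous_grad3 (hgi i)
  have hJ := continuous_jac hg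
  calc ∫ x, ‖g x‖ ^ 2 = ∑ i, ∫ x, g x i ^ 2 := by
        simp only [EuclideanSpace.real_norm_sq_eq]
        exact integral_finsetSum _ fun i _ => hs.integrable_of_vanishing_jet (by fun_prop) (by simp_all)
    _ ≤ ∑ i, 4 / 9 * ∫ x, ‖x‖ ^ 2 * ‖grad3 (fun y => g y i) x‖ ^ 2 :=
        Finset.sum_le_sum fun i _ => integral_sq_le_hardy (hgi i)
          (hs.comp_left (g := fun v : E3 => v i) rfl)
    _ = 4 / 9 * ∫ x, ‖x‖ ^ 2 * jacFrobSq g x := by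
        rw [← Finset.mul_sum, ← integral_finsetSum _ fun i _ =>
          hs.integrable_of_vanishing_jet (by fun_prop) (by simp_all [grad3, toE3, Pi.zero_def])]
        simp only [jacFrobSq_eq_sum_norm_grad3_sq, Finset.mul_sum]

theorem four_mul_integral_inner_mul_div3_le (hg : ContDiff ℝ 1 g) (hs : HasCompactSupport g) :
    4 * ∫ x, ⟪x, g x⟫ * div3 g x
      ≤ 1 / 8 * (∫ x, ‖g x‖ ^ 2) + 32 * ∫ x, ‖x‖ ^ 2 * div3 g x ^ 2 := by
  have hgc := hg.continuous
  have hdivc := continuous_div3 hg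
  have hpt : ∀ x : E3, 4 * (⟪x, g x⟫ * div3 g x)
      ≤ 1 / 8 * ‖g x‖ ^ 2 + 32 * (‖x‖ ^ 2 * div3 g x ^ 2) := fun x => by
    have hcs := abs_real_inner_le_norm x (g x)
    nlinarith [sq_nonneg (‖g x‖ - 16 * (‖x‖ * |div3 g x|)), abs_mul_abs_self (div3 g x),
      abs_mul ⟪x, g x⟫ (div3 g x), le_abs_self (⟪x, g x⟫ * div3 g x), abs_nonneg (div3 g x),
      norm_nonneg x, norm_nonneg (g x)]
  have hmono := integral_mono (hs.integrable_of_vanishing_jet (by fun_prop) (by simp_all [div3]))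
    (hs.integrable_of_vanishing_jet (by fun_prop) (by simp_all [div3])) hpt
  rwa [integral_add (hs.integrable_of_vanishing_jet (by fun_prop) (by simp_all))
      (hs.integrable_of_vanishing_jet (by fun_prop) (by simp_all [div3])),
    integral_const_mul, integral_const_mul, integral_const_mul] at hmono

theorem integral_norm_sq_mul_jacFrobSq_le (hg : ContDiff ℝ 2 g) (hs : HasCompactSupport g) :
    ∫ x, ‖x‖ ^ 2 * jacFrobSq g x
      ≤ 18 * (∫ x, ‖x‖ ^ 2 * ‖curl3 g x‖ ^ 2) + 594 * ∫ x, ‖x‖ ^ 2 * div3 g x ^ 2 := by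
  have hg1 : ContDiff ℝ 1 g := hg.of_le (by norm_num)
  linarith [integral_norm_sq_mul_jacFrobSq hg hs, integral_norm_sq_le_hardy hg1 hs,
    four_mul_integral_inner_mul_div3_le hg1 hs]

end VectorField

theorem weighted_grad_le_curl_add_div :
    ∃ c > (0:ℝ), ∀ g : E3 → E3, ContDiff ℝ 3 g → HasCompactSupport g →
    MemLp (fun x => ‖x‖ * ‖curl3 g x‖) 2 volume →
    MemLp (fun x => ‖x‖ * div3 g x) 2 volume →
    eLpNorm (fun x => ‖x‖ * Real.sqrt (jacFrobSq g x)) 2 volume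
      ≤ ENNReal.ofReal c * (eLpNorm (fun x => ‖x‖ * ‖curl3 g x‖) 2 volume
        + eLpNorm (fun x => ‖x‖ * |div3 g x|) 2 volume) := by
  refine ⟨25, by norm_num, fun g hg hs _ _ => ?_⟩
  have hg1 : ContDiff ℝ 1 g := hg.of_le (by norm_num)
  have hJFc := continuous_jacFrobSq hg1
  have hcurlc := continuous_curl3 hg1
  have hdivc := continuous_div3 hg1
  have hmem : ∀ {f : E3 → ℝ}, Continuous f →
      (∀ x, g x = 0 → (∀ i j, jac g i j x = 0) → f x = 0) → MemLp f 2 volume :=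
    fun hf h0 => hf.memLp_of_hasCompactSupport (hs.of_vanishing_jet h0)
  rw [eLpNorm_two_eq_sqrt_integral_sq (hmem (by fun_prop) (by simp_all [jacFrobSq])),
    eLpNorm_two_eq_sqrt_integral_sq (hmem (by fun_prop) (by simp_all [curl3, toE3])),
    eLpNorm_two_eq_sqrt_integral_sq (hmem (by fun_prop) (by simp_all [div3])),
    ← ENNReal.ofReal_add (Real.sqrt_nonneg _) (Real.sqrt_nonneg _),
    ← ENNReal.ofReal_mul (by norm_num)]
  refine ENNReal.ofReal_le_ofReal (Real.sqrt_le_mul_add_sqrt (by positivity) (by positivity)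
    (by norm_num) ?_)
  simp only [mul_pow, Real.sq_sqrt (jacFrobSq_nonneg g _), sq_abs]
  have hC : 0 ≤ ∫ x, ‖x‖ ^ 2 * ‖curl3 g x‖ ^ 2 := integral_nonneg fun _ => by positivity
  have hD : 0 ≤ ∫ x, ‖x‖ ^ 2 * div3 g x ^ 2 := integral_nonneg fun _ => by positivity
  linarith [integral_norm_sq_mul_jacFrobSq_le (hg.of_le (by norm_num)) hs]
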